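/- Let a, w, b, a', w', b' be elements of the free monoid on an alphabet α with w ≠ 1. Then there exist an integer m ≥ 1 and N ∈ ℕ such that for all k ≥ N: a * w^k * b belongs to the sandwich a'⟨w'⟩b' if and only if a * w^{k+m} * b belongs to a'⟨w'⟩b'. (Membership of a w^k b in a fixed sandwich is an eventually periodic condition on k.) -/

import Mathlib

/-!
A word `a * w ^ K * b` with `K` large that also reads `a' * w' ^ n * b'` forces, after cancelling
the shorter of `a`, `a'`, a conjugacy `w ^ |w'| * β = β * w' ^ |w|` between two words of the same
length: both are prefixes of one long power of `w`. This relation lets one insert `w ^ |w'|` on the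
left exactly when one inserts `w' ^ |w|` on the right, so membership in `a'⟨w'⟩b'` is periodic with
period `|w'|` from then on. When `w' = 1` the sandwich is a single word, which `a * w ^ k * b`
eventually outgrows.
-/

/-- The sandwich `a⟨w⟩b = {a * w^n * b : n ∈ ℕ}` in a monoid. -/
def sandwich {S : Type*} [Monoid S] (a w b : S) : Set S :=
  Set.range fun n : ℕ => a * w ^ n * b

theorem sandwich_one {S : Type*} [Monoid S] (a b : S) : sandwich a 1 b = {a * b} := by
  simp [sandwich]

theorem mul_pow_add_eq_mul_pow_add_iff {M : Type*} [Monoid M] [IsLeftCancelMul M]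
    {u v β c d : M} {p q : ℕ} (hconj : u ^ p * β = β * v ^ q) (k n : ℕ) :
    u ^ (k + p) * d = β * (v ^ (n + q) * c) ↔ u ^ k * d = β * (v ^ n * c) := by
  have hlhs : u ^ (k + p) * d = u ^ p * (u ^ k * d) := by rw [← mul_assoc, ← pow_add, add_comm]
  have hrhs : β * (v ^ (n + q) * c) = u ^ p * (β * (v ^ n * c)) := by
    rw [← mul_assoc (u ^ p), hconj, add_comm, pow_add]
    simp only [mul_assoc]
  rw [hlhs, hrhs, mul_right_inj]

namespace FreeMonoid

variable {α : Type*}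

theorem length_pow (x : FreeMonoid α) (n : ℕ) : (x ^ n).length = n * x.length := by
  induction n with
  | zero => rw [pow_zero, length_one, zero_mul]
  | succ n ih => rw [pow_succ, length_mul, ih, Nat.succ_mul]

theorem one_le_length {w : FreeMonoid α} (hw : w ≠ 1) : 1 ≤ w.length :=
  Nat.one_le_iff_ne_zero.2 (mt length_eq_zero.1 hw)

theorem le_length_mul_pow_mul {w : FreeMonoid α} (hw : w ≠ 1) (a b : FreeMonoid α) (k : ℕ) :
    k ≤ (a * w ^ k * b).length := by
  have := Nat.le_mul_of_pos_right k (one_le_length hw)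
  simp only [length_mul, length_pow]
  omega

theorem le_of_length_le_length_mul_pow_mul {a w b : FreeMonoid α} {c i : ℕ} (hw : w ≠ 1)
    (h : a.length + b.length + c * w.length ≤ (a * w ^ i * b).length) : c ≤ i := by
  simp only [length_mul, length_pow] at h
  exact Nat.le_of_mul_le_mul_right (by omega) (one_le_length hw)

theorem dvd_of_mul_eq_mul {x y c d : FreeMonoid α} (h : x * c = y * d)
    (hle : x.length ≤ y.length) : x ∣ y := by
  have hx : x.toList <+: y.toList ++ d.toList := ⟨c.toList, congrArg toList h⟩
  obtain ⟨r, hr⟩ := List.prefix_of_prefix_length_le hx (List.prefix_append _ _) hle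
  exact ⟨ofList r, toList.injective hr.symm⟩

theorem eq_of_mul_eq_mul_of_length_eq {x y c d : FreeMonoid α} (h : x * c = y * d)
    (hlen : x.length = y.length) : x = y :=
  toList.injective (List.append_inj_left (congrArg toList h) hlen)

theorem pow_length_mul_eq_mul_pow_length {u v β d : FreeMonoid α} {k : ℕ} (hβ : β ∣ u ^ k)
    (hv : β * v ^ u.length ∣ u ^ k * d) (hlen : β.length + u.length * v.length ≤ k * u.length) :
    u ^ v.length * β = β * v ^ u.length := by
  obtain ⟨z, hz⟩ := hβ
  obtain ⟨e, he⟩ := hv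
  obtain ⟨r, hr⟩ := dvd_of_mul_eq_mul he.symm (by simpa only [length_mul, length_pow] using hlen)
  have hleft : u ^ v.length * β * z = u ^ (v.length + k) := by rw [mul_assoc, ← hz, pow_add]
  have hright : β * v ^ u.length * (r * u ^ v.length) = u ^ (v.length + k) := by
    rw [← mul_assoc, ← hr, add_comm, pow_add]
  refine eq_of_mul_eq_mul_of_length_eq (hleft.trans hright.symm) ?_
  simp only [length_mul, length_pow]
  ring

theorem mul_pow_add_mul_eq_mul_pow_add_mul_iff {a w b a' w' b' : FreeMonoid α} {K n : ℕ}
    (hw : w ≠ 1) (hw' : w' ≠ 1) (h : a * w ^ K * b = a' * w' ^ n * b')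
    (hlong : a.length + b.length + a'.length + b'.length + w.length * w'.length ≤
      (a * w ^ K * b).length) (j i : ℕ) :
    a * w ^ (j + w'.length) * b = a' * w' ^ (i + w.length) * b' ↔
      a * w ^ j * b = a' * w' ^ i * b' := by
  wlog hle : a.length ≤ a'.length generalizing a w b a' w' b' K n j i
  · have hlong' : a'.length + b'.length + a.length + b.length + w'.length * w.length ≤
        (a' * w' ^ n * b').length := by
      rw [← h, mul_comm]; omega
    simpa only [eq_comm] using this hw' hw h.symm hlong' i j (by omega)
  have hn : w.length ≤ n := le_of_length_le_length_mul_pow_mul hw' (by rw [← h]; omega)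
  obtain ⟨β, rfl⟩ := dvd_of_mul_eq_mul (c := w ^ K * b) (d := w' ^ n * b')
    (by simpa only [mul_assoc] using h) hle
  simp only [length_mul, length_pow] at hlong
  simp only [mul_assoc, mul_right_inj] at h ⊢
  have hβ : β ∣ w ^ K := dvd_of_mul_eq_mul h.symm (by rw [length_pow]; nlinarith)
  have hv : β * w' ^ w.length ∣ w ^ K * b := by
    refine ⟨w' ^ (n - w.length) * b', ?_⟩
    rw [h, ← Nat.add_sub_cancel' hn, pow_add, Nat.add_sub_cancel_left]
    simp only [mul_assoc]
  exact mul_pow_add_eq_mul_pow_add_iff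
    (pow_length_mul_eq_mul_pow_length hβ hv (by nlinarith)) j i

end FreeMonoid

open FreeMonoid

theorem sandwich_membership_eventually_periodic
    {α : Type*} (a w b a' w' b' : FreeMonoid α) (hw : w ≠ 1) :
    ∃ (m : ℕ), 1 ≤ m ∧ ∃ N : ℕ, ∀ k ≥ N,
      (a * w ^ k * b ∈ sandwich a' w' b' ↔
        a * w ^ (k + m) * b ∈ sandwich a' w' b') := by
  rcases eq_or_ne w' 1 with rfl | hw'
  · refine ⟨1, le_rfl, (a' * b').length + 1, fun k hk => ?_⟩
    have hne : ∀ j ≥ k, a * w ^ j * b ≠ a' * b' := fun j hj h => by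
      have := le_length_mul_pow_mul hw a b j
      rw [h] at this
      omega
    simp only [sandwich_one, Set.mem_singleton_iff]
    exact iff_of_false (hne k le_rfl) (hne _ (by omega))
  set N := a.length + b.length + a'.length + b'.length + w.length * w'.length
  have hlong : ∀ j ≥ N, N ≤ (a * w ^ j * b).length := fun j hj =>
    hj.trans (le_length_mul_pow_mul hw a b j)
  refine ⟨w'.length, one_le_length hw', N, fun k hk => ⟨?_, ?_⟩⟩
  · rintro ⟨n, hn : a' * w' ^ n * b' = _⟩
    exact ⟨n + w.length,
      ((mul_pow_add_mul_eq_mul_pow_add_mul_iff hw hw' hn.symm (hlong k hk) k n).2 hn.symm).symm⟩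
  · rintro ⟨n, hn : a' * w' ^ n * b' = _⟩
    have hlong' := hlong (k + w'.length) (by omega)
    have hwn : w.length ≤ n := le_of_length_le_length_mul_pow_mul hw' (by rw [hn]; omega)
    obtain ⟨i, rfl⟩ := Nat.exists_eq_add_of_le' hwn
    exact ⟨i, ((mul_pow_add_mul_eq_mul_pow_add_mul_iff hw hw' hn.symm hlong' k i).1 hn.symm).symm⟩
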